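/- (Optimal covariant discrimination) Consider the family of pure states $|\psi_y\rangle = \sum_{z \in \mathbb{F}_2^l} (-1)^{z \cdot y}\sqrt{P(z)}\,|z\rangle$ for $y \in \mathbb{F}_2^l$ with equal prior probabilities $2^{-l}$, where $P$ is a probability distribution on $\mathbb{F}_2^l$. The maximal probability of correctly identifying $y$ over all POVMs equals $\left(\sum_{z} \sqrt{P(z)}\sqrt{2^{-l}}\right)^2$. -/

import Mathlib

open Matrix
open scoped ComplexOrder

/-- The pure state `|ψ_y⟩ = ∑ z (-1)^{z·y} √(P z) |z⟩`. -/
noncomputable def psiKet (l : ℕ) (P : (Fin l → ZMod 2) → ℝ)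
    (y : Fin l → ZMod 2) : (Fin l → ZMod 2) → ℂ :=
  fun z => (-1 : ℂ) ^ ((z ⬝ᵥ y : ZMod 2)).val * (Real.sqrt (P z) : ℝ)

/-- The success probability `2^{-l} ∑_y ⟨ψ_y| M_y |ψ_y⟩` of the POVM `M`. -/
noncomputable def succProb (l : ℕ) (P : (Fin l → ZMod 2) → ℝ)
    (M : (Fin l → ZMod 2) → Matrix (Fin l → ZMod 2) (Fin l → ZMod 2) ℂ) : ℝ :=
  ((2 : ℝ) ^ l)⁻¹ *
    ∑ y, ((star (psiKet l P y)) ⬝ᵥ ((M y).mulVec (psiKet l P y))).re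

/-! The optimal measurement is the Walsh basis: projecting onto `χ_y / √2ˡ`, where
`χ_y z = (-1)^{z·y}`, gives every `ψ_y` the same overlap `2^{-l/2} ∑ z, √(P z)`.
Conversely, a positive semidefinite `M` has `|M z z'|² ≤ M z z * M z' z'` (a 2 × 2 principal
minor), so `⟨ψ|M|ψ⟩ ≤ (∑ z, |ψ z| √(M z z))² ≤ (∑ z, |ψ z|) (∑ z, |ψ z| M z z)` by
Cauchy–Schwarz. All `ψ_y` have the moduli `√(P z)`, and summing over `y` with
`∑ y, M_y z z = 1` bounds the success probability by `2^{-l} (∑ z, √(P z))²`. -/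

namespace Matrix.PosSemidef

variable {n 𝕜 : Type*} [RCLike 𝕜] {M : Matrix n n 𝕜}

lemma norm_apply_sq_le (hM : M.PosSemidef) (i j : n) :
    ‖M i j‖ ^ 2 ≤ RCLike.re (M i i) * RCLike.re (M j j) := by
  have hdet := (hM.submatrix ![i, j]).det_nonneg
  rw [det_fin_two] at hdet
  simp only [submatrix_apply, cons_val_zero, cons_val_one] at hdet
  rw [← hM.isHermitian.apply j i, RCLike.star_def, RCLike.mul_conj] at hdet
  have hii := RCLike.nonneg_iff.mp (hM.diag_nonneg (i := i))
  have hjj := RCLike.nonneg_iff.mp (hM.diag_nonneg (i := j))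
  have := (RCLike.nonneg_iff.mp hdet).1
  simp only [map_sub, RCLike.mul_re, hii.2, hjj.2, mul_zero, sub_zero] at this
  rw [← RCLike.ofReal_pow, RCLike.ofReal_re] at this
  linarith

lemma norm_apply_le (hM : M.PosSemidef) (i j : n) :
    ‖M i j‖ ≤ √(RCLike.re (M i i)) * √(RCLike.re (M j j)) := by
  rw [← Real.sqrt_mul (RCLike.nonneg_iff.mp hM.diag_nonneg).1]
  exact Real.le_sqrt_of_sq_le (hM.norm_apply_sq_le i j)

lemma re_dotProduct_mulVec_le_sq [Fintype n] (hM : M.PosSemidef) (x : n → 𝕜) :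
    RCLike.re (star x ⬝ᵥ M *ᵥ x) ≤ (∑ i, ‖x i‖ * √(RCLike.re (M i i))) ^ 2 := by
  calc RCLike.re (star x ⬝ᵥ M *ᵥ x)
      ≤ ‖star x ⬝ᵥ M *ᵥ x‖ := RCLike.re_le_norm _
    _ ≤ ∑ i, ∑ j, ‖x i‖ * (‖M i j‖ * ‖x j‖) := by
      simp only [dotProduct, mulVec, Finset.mul_sum]
      refine (norm_sum_le _ _).trans (Finset.sum_le_sum fun i _ => ?_)
      refine (norm_sum_le _ _).trans_eq (Finset.sum_congr rfl fun j _ => ?_)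
      simp
    _ ≤ ∑ i, ∑ j, (‖x i‖ * √(RCLike.re (M i i))) * (‖x j‖ * √(RCLike.re (M j j))) := by
      refine Finset.sum_le_sum fun i _ => Finset.sum_le_sum fun j _ => ?_
      calc ‖x i‖ * (‖M i j‖ * ‖x j‖)
          ≤ ‖x i‖ * ((√(RCLike.re (M i i)) * √(RCLike.re (M j j))) * ‖x j‖) := by
            gcongr; exact hM.norm_apply_le i j
        _ = _ := by ring
    _ = _ := by rw [sq, Finset.sum_mul_sum]

lemma re_dotProduct_mulVec_le [Fintype n] (hM : M.PosSemidef) (x : n → 𝕜) :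
    RCLike.re (star x ⬝ᵥ M *ᵥ x) ≤ (∑ i, ‖x i‖) * ∑ i, ‖x i‖ * RCLike.re (M i i) := by
  refine (hM.re_dotProduct_mulVec_le_sq x).trans ?_
  have hd i := (RCLike.nonneg_iff.mp (hM.diag_nonneg (i := i))).1
  refine Finset.sum_sq_le_sum_mul_sum_of_sq_le_mul _ (fun i _ => norm_nonneg _)
    (fun i _ => mul_nonneg (norm_nonneg _) (hd i)) fun i _ => le_of_eq ?_
  rw [mul_pow, Real.sq_sqrt (hd i)]
  ring

end Matrix.PosSemidef

theorem sum_re_dotProduct_mulVec_le_of_sum_eq_one {ι n 𝕜 : Type*} [Fintype ι] [Fintype n]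
    [DecidableEq n] [RCLike 𝕜] {M : ι → Matrix n n 𝕜} (hM : ∀ y, (M y).PosSemidef)
    (hsum : ∑ y, M y = 1) {ψ : ι → n → 𝕜} {r : n → ℝ} (hψ : ∀ y z, ‖ψ y z‖ = r z) :
    ∑ y, RCLike.re (star (ψ y) ⬝ᵥ M y *ᵥ ψ y) ≤ (∑ z, r z) ^ 2 := by
  have hdiag z : ∑ y, RCLike.re (M y z z) = 1 := by
    simpa [Matrix.sum_apply] using congrArg RCLike.re (congrFun (congrFun hsum z) z)
  calc ∑ y, RCLike.re (star (ψ y) ⬝ᵥ M y *ᵥ ψ y)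
      ≤ ∑ y, (∑ z, r z) * ∑ z, r z * RCLike.re (M y z z) :=
        Finset.sum_le_sum fun y _ => by simpa only [hψ] using (hM y).re_dotProduct_mulVec_le (ψ y)
    _ = (∑ z, r z) * ∑ z, r z * ∑ y, RCLike.re (M y z z) := by
        simp only [← Finset.mul_sum, Finset.sum_comm (γ := ι)]
    _ = (∑ z, r z) ^ 2 := by simp [hdiag, sq]

section Walsh

variable {ι : Type*} [Fintype ι]

noncomputable def walsh (y z : ι → ZMod 2) : ℂ := (-1) ^ (z ⬝ᵥ y).val

lemma neg_one_pow_val_add {R : Type*} [Ring R] (a b : ZMod 2) :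
    (-1 : R) ^ (a + b).val = (-1) ^ a.val * (-1) ^ b.val := by
  rw [ZMod.val_add, ← neg_one_pow_eq_pow_mod_two, pow_add]

lemma walsh_comm (y z : ι → ZMod 2) : walsh y z = walsh z y := by
  rw [walsh, walsh, dotProduct_comm]

lemma walsh_add (y z z' : ι → ZMod 2) : walsh y (z + z') = walsh y z * walsh y z' := by
  rw [walsh, add_dotProduct, neg_one_pow_val_add]; rfl

lemma walsh_mul_self (y z : ι → ZMod 2) : walsh y z * walsh y z = 1 := by
  rw [walsh, ← mul_pow]
  norm_num

lemma star_walsh (y z : ι → ZMod 2) : star (walsh y z) = walsh y z := by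
  simp [walsh]

lemma norm_walsh (y z : ι → ZMod 2) : ‖walsh y z‖ = 1 := by
  simp [walsh]

lemma sum_walsh [DecidableEq ι] (w : ι → ZMod 2) :
    ∑ y, walsh y w = if w = 0 then (2 : ℂ) ^ Fintype.card ι else 0 := by
  split_ifs with hw
  · simp [hw, walsh]
  obtain ⟨i, hi⟩ := Function.ne_iff.mp hw
  have hwi : w i = 1 := Fin.eq_one_of_ne_zero _ hi
  have hflip : walsh w (Pi.single i 1) = -1 := by
    rw [walsh, single_dotProduct, one_mul, hwi, ZMod.val_one, pow_one]
  have hshift := Equiv.sum_comp (Equiv.addRight (Pi.single i 1 : ι → ZMod 2)) (walsh · w)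
  simp only [Equiv.coe_addRight, walsh_comm _ w, walsh_add, hflip, mul_neg_one,
    Finset.sum_neg_distrib] at hshift ⊢
  exact self_eq_neg.mp hshift.symm

omit [Fintype ι] in
lemma add_eq_zero_iff_eq_of_zmod_two (z z' : ι → ZMod 2) : z + z' = 0 ↔ z = z' := by
  rw [add_eq_zero_iff_eq_neg, show -z' = z' from funext fun i => ZMod.neg_eq_self_mod_two _]

noncomputable def walshMeasurement (y : ι → ZMod 2) : Matrix (ι → ZMod 2) (ι → ZMod 2) ℂ :=
  ((2 : ℂ) ^ Fintype.card ι)⁻¹ • vecMulVec (walsh y) (star (walsh y))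

lemma posSemidef_walshMeasurement (y : ι → ZMod 2) : (walshMeasurement y).PosSemidef :=
  (posSemidef_vecMulVec_self_star _).smul (by positivity)

lemma sum_walshMeasurement [DecidableEq ι] : ∑ y : ι → ZMod 2, walshMeasurement y = 1 := by
  ext z z'
  simp only [Matrix.sum_apply, walshMeasurement, Matrix.smul_apply, vecMulVec_apply, Pi.star_apply,
    star_walsh, ← walsh_add, smul_eq_mul, ← Finset.mul_sum, sum_walsh, one_apply,
    add_eq_zero_iff_eq_of_zmod_two]
  split_ifs <;> simp

lemma star_dotProduct_walshMeasurement_mulVec [DecidableEq ι] (y : ι → ZMod 2)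
    (x : (ι → ZMod 2) → ℂ) :
    star x ⬝ᵥ walshMeasurement y *ᵥ x
      = ((2 : ℂ) ^ Fintype.card ι)⁻¹ * (star (star (walsh y) ⬝ᵥ x) * (star (walsh y) ⬝ᵥ x)) := by
  rw [walshMeasurement, smul_mulVec, dotProduct_smul, vecMulVec_mulVec, dotProduct_smul,
    op_smul_eq_mul, star_dotProduct x, smul_eq_mul]

end Walsh

section DiscriminationProblem

variable (l : ℕ) (P : (Fin l → ZMod 2) → ℝ)

lemma psiKet_apply (y z : Fin l → ZMod 2) : psiKet l P y z = walsh y z * (√(P z) : ℂ) := rfl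

lemma norm_psiKet (y z : Fin l → ZMod 2) : ‖psiKet l P y z‖ = √(P z) := by
  simp [psiKet_apply, norm_walsh]

lemma star_walsh_dotProduct_psiKet (y : Fin l → ZMod 2) :
    star (walsh y) ⬝ᵥ psiKet l P y = ((∑ z, √(P z) : ℝ) : ℂ) := by
  simp only [dotProduct, Pi.star_apply, star_walsh, psiKet_apply, ← mul_assoc, walsh_mul_self,
    one_mul, Complex.ofReal_sum]

lemma succProb_walshMeasurement :
    succProb l P walshMeasurement = (∑ z, √(P z) * √(((2 : ℝ) ^ l)⁻¹)) ^ 2 := by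
  have hquad y : (star (psiKet l P y) ⬝ᵥ (walshMeasurement y).mulVec (psiKet l P y)).re
      = ((2 : ℝ) ^ l)⁻¹ * (∑ z, √(P z)) ^ 2 := by
    rw [star_dotProduct_walshMeasurement_mulVec, star_walsh_dotProduct_psiKet, Complex.star_def,
      Complex.conj_ofReal, Fintype.card_fin, ← Complex.ofReal_mul, ← sq]
    simp only [← Complex.ofReal_ofNat, ← Complex.ofReal_pow, ← Complex.ofReal_inv,
      ← Complex.ofReal_mul, Complex.ofReal_re]
  rw [succProb, Finset.sum_congr rfl fun y _ => hquad y, Finset.sum_const, Finset.card_univ,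
    Fintype.card_fun, ZMod.card, Fintype.card_fin, nsmul_eq_mul, ← Finset.sum_mul, mul_pow,
    Real.sq_sqrt (by positivity)]
  push_cast
  field_simp

end DiscriminationProblem

theorem optimal_covariant_discrimination_general (l : ℕ) (P : (Fin l → ZMod 2) → ℝ) :
    IsGreatest
      {s : ℝ | ∃ M : (Fin l → ZMod 2) →
          Matrix (Fin l → ZMod 2) (Fin l → ZMod 2) ℂ,
        (∀ y, (M y).PosSemidef) ∧ (∑ y, M y = 1) ∧ s = succProb l P M}
      ((∑ z, Real.sqrt (P z) * Real.sqrt (((2 : ℝ) ^ l)⁻¹)) ^ 2) := by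
  refine ⟨⟨walshMeasurement, posSemidef_walshMeasurement, sum_walshMeasurement,
    (succProb_walshMeasurement l P).symm⟩, ?_⟩
  rintro _ ⟨M, hM, hsum, rfl⟩
  have hbound := sum_re_dotProduct_mulVec_le_of_sum_eq_one hM hsum (norm_psiKet l P)
  rw [← Finset.sum_mul, mul_pow, Real.sq_sqrt (by positivity), succProb, mul_comm]
  gcongr
  simpa using hbound

/-- Optimal covariant discrimination: the maximal probability of correctly identifying
`y` among the equiprobable states `|ψ_y⟩`, over all POVMs, equals
`(∑ z √(P z) √(2^{-l}))²`. -/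
theorem optimal_covariant_discrimination (l : ℕ) (P : (Fin l → ZMod 2) → ℝ)
    (hP0 : ∀ z, 0 ≤ P z) (hP1 : ∑ z, P z = 1) :
    IsGreatest
      {s : ℝ | ∃ M : (Fin l → ZMod 2) →
          Matrix (Fin l → ZMod 2) (Fin l → ZMod 2) ℂ,
        (∀ y, (M y).PosSemidef) ∧ (∑ y, M y = 1) ∧ s = succProb l P M}
      ((∑ z, Real.sqrt (P z) * Real.sqrt (((2 : ℝ) ^ l)⁻¹)) ^ 2) :=
  optimal_covariant_discrimination_general l P
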